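/- Let L be a set of axis-parallel lines none of which contains a point of the finite set P ⊂ ℝ², and suppose L hits all segments induced by P. For p ∈ P let ρ(p) = (i, j) where i is the number of vertical lines of L left of p and j the number of horizontal lines of L below p. Then the layout placing a unit square centered at (i(1+δ) + 1/2 + δ·α_i(p)/n, j(1+δ) + 1/2 + δ·β_j(p)/n) — where α_i(p) is the rank of p.x among points p' with ρ_x(p') = i and β_j(p) the rank of p.y among points with ρ_y(p') = j, n = |P|, and 0 < δ — is a disjoint layout: any two distinct points p, p' receive centers whose x-coordinates differ by at least 1 or whose y-coordinates differ by at least 1. -/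
import Mathlib


open scoped Classical

/-- An axis-parallel line in the plane: `vert a` is the line `x = a`,
`horiz b` is the line `y = b`. -/
inductive ALine where
  | vert : ℝ → ALine
  | horiz : ℝ → ALine

/-- `a` lies strictly between `u` and `v`. -/
def strictBetween (a u v : ℝ) : Prop := (u < a ∧ a < v) ∨ (v < a ∧ a < u)

/-- An axis-parallel line hits the segment joining `p` and `q` iff it meets the
relative interior of the segment but neither endpoint. -/
def ALine.hits : ALine → ℝ × ℝ → ℝ × ℝ → Prop
  | .vert a, p, q => strictBetween a p.1 q.1
  | .horiz b, p, q => strictBetween b p.2 q.2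

/-- The line contains the point `p`. -/
def ALine.containsPt : ALine → ℝ × ℝ → Prop
  | .vert a, p => p.1 = a
  | .horiz b, p => p.2 = b

/-- The line is vertical. -/
def ALine.isVert : ALine → Prop
  | .vert _ => True
  | .horiz _ => False

/-- The line is horizontal. -/
def ALine.isHoriz : ALine → Prop
  | .vert _ => False
  | .horiz _ => True

/-- Two layouts (assignments of centers to the items indexed by `ι`) have the
same orthogonal order. -/
def orthOrder {ι : Type*} (f g : ι → ℝ × ℝ) : Prop :=
  ∀ i j : ι,
    ((f i).1 < (f j).1 ↔ (g i).1 < (g j).1) ∧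
    ((f i).1 = (f j).1 ↔ (g i).1 = (g j).1) ∧
    ((f i).2 < (f j).2 ↔ (g i).2 < (g j).2) ∧
    ((f i).2 = (f j).2 ↔ (g i).2 = (g j).2)

/-- A layout of unit squares is disjoint iff any two distinct centers are at
distance at least 1 in the `x`- or the `y`-coordinate. -/
def disjointUnitLayout {ι : Type*} (f : ι → ℝ × ℝ) : Prop :=
  ∀ i j : ι, i ≠ j → 1 ≤ |(f i).1 - (f j).1| ∨ 1 ≤ |(f i).2 - (f j).2|

/-- Width of the bounding box of a layout of unit squares. -/
noncomputable def unitWidth {n : ℕ} (f : Fin n → ℝ × ℝ) : ℝ :=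
  (⨆ i, (f i).1) - (⨅ i, (f i).1) + 1

/-- Height of the bounding box of a layout of unit squares. -/
noncomputable def unitHeight {n : ℕ} (f : Fin n → ℝ × ℝ) : ℝ :=
  (⨆ i, (f i).2) - (⨅ i, (f i).2) + 1

/-- Number of vertical lines of `L` strictly to the left of `p`. -/
noncomputable def vcnt (L : Finset ALine) (p : ℝ × ℝ) : ℕ :=
  (L.filter (fun l => match l with | .vert a => a < p.1 | .horiz _ => False)).card

/-- Number of horizontal lines of `L` strictly below `p`. -/
noncomputable def hcnt (L : Finset ALine) (p : ℝ × ℝ) : ℕ :=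
  (L.filter (fun l => match l with | .horiz b => b < p.2 | .vert _ => False)).card

/-- Rank of `p.x` among the x-coordinates of the points of `P` in the same
column (same number of vertical lines to the left) as `p`. -/
noncomputable def xrank (L : Finset ALine) (P : Finset (ℝ × ℝ)) (p : ℝ × ℝ) : ℕ :=
  (((P.filter (fun q => vcnt L q = vcnt L p)).image Prod.fst).filter
    (fun t => t ≤ p.1)).card

/-- Rank of `p.y` among the y-coordinates of the points of `P` in the same row
(same number of horizontal lines below) as `p`. -/
noncomputable def yrank (L : Finset ALine) (P : Finset (ℝ × ℝ)) (p : ℝ × ℝ) : ℕ :=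
  (((P.filter (fun q => hcnt L q = hcnt L p)).image Prod.snd).filter
    (fun t => t ≤ p.2)).card

/-- The layout placing the unit square of `p` at
`(i(1+δ) + 1/2 + δ·α_i(p)/n, j(1+δ) + 1/2 + δ·β_j(p)/n)`. -/
noncomputable def place (L : Finset ALine) (P : Finset (ℝ × ℝ)) (δ : ℝ)
    (p : ℝ × ℝ) : ℝ × ℝ :=
  ((vcnt L p : ℝ) * (1 + δ) + 1/2 + δ * (xrank L P p : ℝ) / (P.card : ℝ),
   (hcnt L p : ℝ) * (1 + δ) + 1/2 + δ * (yrank L P p : ℝ) / (P.card : ℝ))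


lemma vcnt_lt (L : Finset ALine) (p q : ℝ × ℝ) (a : ℝ)
    (hL : ALine.vert a ∈ L) (h1 : p.1 < a) (h2 : a < q.1) :
    vcnt L p < vcnt L q := by
  apply Finset.card_lt_card
  constructor
  · intro l hl
    simp only [Finset.mem_filter] at hl ⊢
    refine ⟨hl.1, ?_⟩
    cases l with
    | vert b => exact lt_trans (lt_trans hl.2 h1) h2
    | horiz b => exact hl.2
  · intro hsub
    have := hsub (Finset.mem_filter.mpr ⟨hL, h2⟩)
    simp only [Finset.mem_filter] at this
    exact absurd this.2 (not_lt.mpr h1.le)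

lemma hcnt_lt (L : Finset ALine) (p q : ℝ × ℝ) (b : ℝ)
    (hL : ALine.horiz b ∈ L) (h1 : p.2 < b) (h2 : b < q.2) :
    hcnt L p < hcnt L q := by
  apply Finset.card_lt_card
  constructor
  · intro l hl
    simp only [Finset.mem_filter] at hl ⊢
    refine ⟨hl.1, ?_⟩
    cases l with
    | vert c => exact hl.2
    | horiz c => exact lt_trans (lt_trans hl.2 h1) h2
  · intro hsub
    have := hsub (Finset.mem_filter.mpr ⟨hL, h2⟩)
    simp only [Finset.mem_filter] at this
    exact absurd this.2 (not_lt.mpr h1.le)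

lemma xrank_le (L : Finset ALine) (P : Finset (ℝ × ℝ)) (p : ℝ × ℝ) :
    xrank L P p ≤ P.card :=
  le_trans (Finset.card_filter_le _ _)
    (le_trans (Finset.card_image_le) (Finset.card_filter_le _ _))

lemma yrank_le (L : Finset ALine) (P : Finset (ℝ × ℝ)) (p : ℝ × ℝ) :
    yrank L P p ≤ P.card :=
  le_trans (Finset.card_filter_le _ _)
    (le_trans (Finset.card_image_le) (Finset.card_filter_le _ _))

lemma place_gap {i i' r r' n δ : ℝ} (hδ : 0 < δ) (hn : 1 ≤ n)
    (hii : i + 1 ≤ i') (hr : 0 ≤ r) (hr' : r' ≤ n) :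
    1 ≤ (i' * (1 + δ) + 1/2 + δ * r / n) - (i * (1 + δ) + 1/2 + δ * r' / n) := by
  have hn0 : 0 < n := lt_of_lt_of_le one_pos hn
  have h1 : δ * r' / n ≤ δ := by rw [div_le_iff₀ hn0]; nlinarith
  have h2 : 0 ≤ δ * r / n := by positivity
  nlinarith

/-- if `L` hits every segment induced by `P` and no line of `L`
contains a point of `P`, then for any `δ > 0` the layout `place L P δ` is a
disjoint layout of unit squares. -/
theorem stmt19 (P : Finset (ℝ × ℝ)) (L : Finset ALine) (δ : ℝ) (hδ : 0 < δ)
    (havoid : ∀ l ∈ L, ∀ p ∈ P, ¬ l.containsPt p)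
    (hhit : ∀ p ∈ P, ∀ q ∈ P, p ≠ q → ∃ l ∈ L, l.hits p q) :
    ∀ p ∈ P, ∀ q ∈ P, p ≠ q →
      1 ≤ |(place L P δ p).1 - (place L P δ q).1| ∨
      1 ≤ |(place L P δ p).2 - (place L P δ q).2| := by
  intro p hp q hq hne
  have hn : (1:ℝ) ≤ (P.card : ℝ) := by
    have : 0 < P.card := Finset.card_pos.mpr ⟨p, hp⟩
    exact_mod_cast this
  obtain ⟨l, hl, hhits⟩ := hhit p hp q hq hne
  have key : ∀ u v : ℝ × ℝ, vcnt L u < vcnt L v →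
      1 ≤ (place L P δ v).1 - (place L P δ u).1 := by
    intro u v huv
    have h1 : (vcnt L u : ℝ) + 1 ≤ (vcnt L v : ℝ) := by exact_mod_cast huv
    have h2 : (0:ℝ) ≤ (xrank L P v : ℝ) := by positivity
    have h3 : (xrank L P u : ℝ) ≤ (P.card : ℝ) := by exact_mod_cast xrank_le L P u
    exact place_gap hδ hn h1 h2 h3
  have keyh : ∀ u v : ℝ × ℝ, hcnt L u < hcnt L v →
      1 ≤ (place L P δ v).2 - (place L P δ u).2 := by
    intro u v huv
    have h1 : (hcnt L u : ℝ) + 1 ≤ (hcnt L v : ℝ) := by exact_mod_cast huv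
    have h2 : (0:ℝ) ≤ (yrank L P v : ℝ) := by positivity
    have h3 : (yrank L P u : ℝ) ≤ (P.card : ℝ) := by exact_mod_cast yrank_le L P u
    exact place_gap hδ hn h1 h2 h3
  cases l with
  | vert a =>
    left
    rcases hhits with ⟨ha1, ha2⟩ | ⟨ha1, ha2⟩
    · have := key p q (vcnt_lt L p q a hl ha1 ha2)
      rw [abs_sub_comm]
      exact le_trans this (le_abs_self _)
    · have := key q p (vcnt_lt L q p a hl ha1 ha2)
      exact le_trans this (le_abs_self _)
  | horiz b =>
    right
    rcases hhits with ⟨hb1, hb2⟩ | ⟨hb1, hb2⟩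
    · have := keyh p q (hcnt_lt L p q b hl hb1 hb2)
      rw [abs_sub_comm]
      exact le_trans this (le_abs_self _)
    · have := keyh q p (hcnt_lt L q p b hl hb1 hb2)
      exact le_trans this (le_abs_self _)
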